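/- Let f_i : ℝⁿ → ℝ, i = 1,...,m, be continuous, and define f(x) = max_i f_i(x). Suppose a sequence {x^l} in a compact set satisfies: (i) f(x^{l+1}) − f(x^l) ≤ −γ^l η̄ ε' whenever f(x^l) ≥ ε and l ≥ l_ε; (ii) |f(x^{l+1}) − f(x^l)| ≤ C' γ^l for all l; with γ^l → 0, ∑γ^l = ∞, and positive constants η̄, ε', C'. Then limsup_{l→∞} f(x^l) ≤ 2ε. -/
import Mathlib


open Filter

/-- If `f = max_i f_i` (finitely many continuous functions) along a sequence
in a compact set satisfies the decrease property (i) when `f(x^l) ≥ ε` and the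
bounded-change property (ii), with `γ^l → 0` and `∑ γ^l = ∞`, then
`limsup_l f(x^l) ≤ 2ε`. -/
theorem stmt10 (n m : ℕ) [NeZero m]
    (fi : Fin m → EuclideanSpace ℝ (Fin n) → ℝ)
    (hcont : ∀ i, Continuous (fi i))
    (f : EuclideanSpace ℝ (Fin n) → ℝ) (hf : ∀ x, f x = ⨆ i, fi i x)
    (K : Set (EuclideanSpace ℝ (Fin n))) (hK : IsCompact K)
    (x : ℕ → EuclideanSpace ℝ (Fin n)) (hxK : ∀ l, x l ∈ K)
    (ε ε' ηbar C' : ℝ) (hε : 0 < ε) (hε' : 0 < ε') (hη : 0 < ηbar)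
    (hC' : 0 < C') (lε : ℕ)
    (γ : ℕ → ℝ) (hγ : ∀ l, γ l ∈ Set.Ioc (0 : ℝ) 1)
    (hγ0 : Tendsto γ atTop (nhds 0)) (hγdiv : ¬ Summable γ)
    (hdec : ∀ l ≥ lε, ε ≤ f (x l) → f (x (l + 1)) - f (x l) ≤ -(γ l * ηbar * ε'))
    (hbch : ∀ l, |f (x (l + 1)) - f (x l)| ≤ C' * γ l) :
    limsup (fun l => f (x l)) atTop ≤ 2 * ε := by
  have hγpos : ∀ l, 0 < γ l := fun l => (hγ l).1
  -- Step 1: infinitely often f(x l) < ε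
  have key : ∀ L, ∃ l ≥ L, f (x l) < ε := by
    intro L
    by_contra h
    push_neg at h
    set M := max L lε with hMdef
    have hM : ∀ l, M ≤ l → ε ≤ f (x l) := fun l hl =>
      h l (le_trans (le_max_left _ _) hl)
    have hMε : lε ≤ M := le_max_right _ _
    have hstep : ∀ k, f (x (M + k)) ≤ f (x M) - ηbar * ε' * ∑ j ∈ Finset.range k, γ (j + M) := by
      intro k
      induction k with
      | zero => simp
      | succ k ih =>
        have hd := hdec (M + k) (le_trans hMε (Nat.le_add_right _ _)) (hM (M + k) (Nat.le_add_right _ _))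
        have h1 : f (x (M + (k + 1))) ≤ f (x (M + k)) - γ (M + k) * ηbar * ε' := by
          have : M + (k + 1) = (M + k) + 1 := by ring
          rw [this]; linarith
        rw [Finset.sum_range_succ]
        have : γ (k + M) = γ (M + k) := by rw [Nat.add_comm]
        rw [this]
        nlinarith [ih, h1]
    have hns : ¬ Summable (fun j => γ (j + M)) := fun hs => hγdiv ((summable_nat_add_iff M).mp hs)
    have htend : Tendsto (fun k => ∑ j ∈ Finset.range k, γ (j + M)) atTop atTop :=
      (not_summable_iff_tendsto_nat_atTop_of_nonneg (fun j => (hγpos _).le)).mp hns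
    obtain ⟨k, hk⟩ := (htend.eventually_ge_atTop ((f (x M) - ε + 1) / (ηbar * ε'))).exists
    have hpos : 0 < ηbar * ε' := mul_pos hη hε'
    have h2 : f (x M) - ε + 1 ≤ ηbar * ε' * ∑ j ∈ Finset.range k, γ (j + M) := by
      rw [div_le_iff₀ hpos] at hk
      linarith [hk]
    have := hstep k
    have := hM (M + k) (Nat.le_add_right _ _)
    linarith
  -- Step 2: eventually steps are small
  have hsmall : ∀ᶠ l in atTop, γ l < ε / C' := hγ0.eventually (gt_mem_nhds (div_pos hε hC'))
  obtain ⟨L₁, hL₁⟩ := eventually_atTop.mp hsmall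
  obtain ⟨l₀, hl₀, hfl₀⟩ := key (max L₁ lε)
  have hl₀L₁ : L₁ ≤ l₀ := le_trans (le_max_left _ _) hl₀
  have hl₀lε : lε ≤ l₀ := le_trans (le_max_right _ _) hl₀
  -- Step 3: from l₀ on, f(x l) < 2ε
  have hbound : ∀ k, f (x (l₀ + k)) < 2 * ε := by
    intro k
    induction k with
    | zero => simpa using lt_of_lt_of_le hfl₀ (by linarith)
    | succ k ih =>
      have hle : l₀ ≤ l₀ + k := Nat.le_add_right _ _
      have hsucc : l₀ + (k + 1) = (l₀ + k) + 1 := by ring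
      rcases lt_or_ge (f (x (l₀ + k))) ε with hlt | hge
      · have hb := hbch (l₀ + k)
        have hγs : γ (l₀ + k) < ε / C' := hL₁ _ (le_trans hl₀L₁ hle)
        have : C' * γ (l₀ + k) < ε := by
          rw [lt_div_iff₀ hC'] at hγs; linarith [hγs]
        have habs := abs_le.mp hb
        rw [hsucc]; linarith [habs.2]
      · have hd := hdec (l₀ + k) (le_trans hl₀lε hle) hge
        have hpos : 0 < γ (l₀ + k) * ηbar * ε' := mul_pos (mul_pos (hγpos _) hη) hε'
        rw [hsucc]; linarith
  -- Step 4: coboundedness from compactness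
  obtain ⟨i0⟩ : Nonempty (Fin m) := ⟨⟨0, Nat.pos_of_ne_zero (NeZero.ne m)⟩⟩
  obtain ⟨z, hzK, hzmin⟩ := hK.exists_isMinOn ⟨x 0, hxK 0⟩ (hcont i0).continuousOn
  have hlower : ∀ l, fi i0 z ≤ f (x l) := by
    intro l
    have h1 : fi i0 z ≤ fi i0 (x l) := hzmin (hxK l)
    have h2 : fi i0 (x l) ≤ ⨆ i, fi i (x l) :=
      le_ciSup (f := fun i => fi i (x l)) (Set.Finite.bddAbove (Set.finite_range _)) i0
    rw [hf]; linarith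
  have hb : IsBoundedUnder (· ≥ ·) atTop (fun l => f (x l)) :=
    isBoundedUnder_of ⟨fi i0 z, fun l => hlower l⟩
  have hcb : IsCoboundedUnder (· ≤ ·) atTop (fun l => f (x l)) :=
    hb.isCobounded_flip
  refine limsup_le_of_le hcb ?_
  filter_upwards [eventually_ge_atTop l₀] with l hl
  have : f (x (l₀ + (l - l₀))) < 2 * ε := hbound (l - l₀)
  rw [Nat.add_sub_cancel' hl] at this
  exact this.le
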